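/- Let Z be a finite-dimensional real Banach space. Then the set { u ∈ S_Z : n(Z,u) > 0 } is countable, and consequently the set N(Z) = { n(Z,u) : u ∈ S_Z } is countable. -/

import Mathlib

open NormedSpace

/-- Numerical radius of `z` with respect to the unit vector `u`. -/
noncomputable def vRad {Z : Type*} [NormedAddCommGroup Z] [NormedSpace ℝ Z] (u z : Z) : ℝ :=
  sSup {r : ℝ | ∃ φ : StrongDual ℝ Z, ‖φ‖ = 1 ∧ φ u = 1 ∧ |φ z| = r}

/-- Numerical index of the space with respect to the unit vector `u`. -/
noncomputable def nInd {Z : Type*} [NormedAddCommGroup Z] [NormedSpace ℝ Z] (u : Z) : ℝ :=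
  sInf {r : ℝ | ∃ z : Z, ‖z‖ = 1 ∧ vRad u z = r}

/-!
If `n(Z, u) > 0`, no nonzero vector is annihilated by the whole face of `B_{Z*}` at `u`, so the
functionals attaining their norm at `u` form a convex cone spanning `Z*`; in finite dimension
this cone has nonempty interior. Two such cones, for unit vectors `u ≠ v`, meet only inside the
hyperplane `{χ | χ (u - v) = 0}`, so their interiors are disjoint. A separable space holds only
countably many disjoint nonempty open sets.
-/

section NumericalIndex

variable {Z : Type*} [NormedAddCommGroup Z] [NormedSpace ℝ Z]

lemma vRad_nonneg (u z : Z) : 0 ≤ vRad u z :=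
  Real.sSup_nonneg <| by rintro r ⟨φ, -, -, rfl⟩; positivity

lemma nInd_nonneg (u : Z) : 0 ≤ nInd u :=
  Real.sInf_nonneg <| by rintro r ⟨z, -, rfl⟩; exact vRad_nonneg u z

lemma nInd_le_vRad (u : Z) {z : Z} (hz : ‖z‖ = 1) : nInd u ≤ vRad u z :=
  csInf_le ⟨0, by rintro r ⟨z', -, rfl⟩; exact vRad_nonneg u z'⟩ ⟨z, hz, rfl⟩

lemma eq_zero_of_forall_face_apply_eq_zero {u : Z} (h : 0 < nInd u) {z : Z}
    (hz : ∀ φ : StrongDual ℝ Z, ‖φ‖ = 1 → φ u = 1 → φ z = 0) : z = 0 := by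
  by_contra hz0
  have hw : ‖‖z‖⁻¹ • z‖ = 1 := norm_smul_inv_norm hz0
  -- an empty face is harmless here: `sSup ∅ = 0` for real numbers
  have hvRad : vRad u (‖z‖⁻¹ • z) ≤ 0 :=
    Real.sSup_nonpos <| by
      rintro r ⟨φ, hφ, hφu, rfl⟩
      simp [hz φ hφ hφu]
  linarith [nInd_le_vRad u hw]

/-- For `‖u‖ = 1` this is the cone `ℝ≥0 • Face(B_{Z*}, u)`. -/
def normingCone (u : Z) : Set (StrongDual ℝ Z) := {χ | ‖χ‖ ≤ χ u}

lemma convex_normingCone (u : Z) : Convex ℝ (normingCone u) := by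
  intro χ₁ h₁ χ₂ h₂ a b ha hb _
  calc ‖a • χ₁ + b • χ₂‖ ≤ a * ‖χ₁‖ + b * ‖χ₂‖ := norm_add_le_of_le
        (by rw [norm_smul, Real.norm_of_nonneg ha]) (by rw [norm_smul, Real.norm_of_nonneg hb])
    _ ≤ a * χ₁ u + b * χ₂ u := by gcongr <;> assumption
    _ = (a • χ₁ + b • χ₂) u := by simp

lemma zero_mem_normingCone (u : Z) : (0 : StrongDual ℝ Z) ∈ normingCone u := by
  simp [normingCone]

lemma apply_eq_norm_of_mem_normingCone {u : Z} (hu : ‖u‖ ≤ 1) {χ : StrongDual ℝ Z}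
    (hχ : χ ∈ normingCone u) : χ u = ‖χ‖ :=
  le_antisymm ((Real.le_norm_self _).trans (by simpa using χ.le_opNorm_of_le hu)) hχ

lemma disjoint_interior_normingCone {u v : Z} (hu : ‖u‖ ≤ 1) (hv : ‖v‖ ≤ 1) (huv : u ≠ v) :
    Disjoint (interior (normingCone u)) (interior (normingCone v)) := by
  let H : Submodule ℝ (StrongDual ℝ Z) :=
    LinearMap.ker (ContinuousLinearMap.apply ℝ ℝ (u - v) : StrongDual ℝ Z →ₗ[ℝ] ℝ)
  have hsub : normingCone u ∩ normingCone v ⊆ H := fun χ ⟨hχu, hχv⟩ => by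
    simp [H, apply_eq_norm_of_mem_normingCone hu hχu, apply_eq_norm_of_mem_normingCone hv hχv]
  rw [Set.disjoint_iff_inter_eq_empty, ← interior_inter, ← Set.not_nonempty_iff_eq_empty]
  intro hne
  have hH : H = ⊤ := H.eq_top_of_nonempty_interior' (hne.mono (interior_mono hsub))
  refine huv (sub_eq_zero.mp (SeparatingDual.eq_zero_of_forall_dual_eq_zero (R := ℝ) fun χ => ?_))
  have hχ : χ ∈ H := hH ▸ Submodule.mem_top
  simpa [H] using hχ

end NumericalIndex

lemma StrongDual.span_eq_top_of_ne_zero {𝕜 E : Type*} [NontriviallyNormedField 𝕜]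
    [CompleteSpace 𝕜] [NormedAddCommGroup E] [NormedSpace 𝕜 E] [FiniteDimensional 𝕜 E]
    {s : Set (StrongDual 𝕜 E)} (h : ∀ z ≠ 0, ∃ f ∈ s, f z ≠ 0) :
    Submodule.span 𝕜 s = ⊤ := by
  let e : (E →ₗ[𝕜] 𝕜) ≃ₗ[𝕜] StrongDual 𝕜 E := LinearMap.toContinuousLinearMap
  have hspan : Submodule.span 𝕜 (e.symm '' s) = ⊤ :=
    Submodule.span_eq_top_of_ne_zero fun z hz => by
      obtain ⟨f, hf, hfz⟩ := h z hz
      exact ⟨e.symm f, Set.mem_image_of_mem _ hf, hfz⟩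
  have := congrArg (Submodule.map (e : (E →ₗ[𝕜] 𝕜) →ₗ[𝕜] StrongDual 𝕜 E)) hspan
  rw [← Submodule.span_image, Submodule.map_top, LinearEquiv.range] at this
  simpa only [LinearEquiv.coe_coe, Set.image_image, LinearEquiv.apply_symm_apply,
    Set.image_id'] using this

section FiniteDimensional

variable {Z : Type*} [NormedAddCommGroup Z] [NormedSpace ℝ Z] [FiniteDimensional ℝ Z]

lemma span_normingCone_eq_top {u : Z} (h : 0 < nInd u) :
    Submodule.span ℝ (normingCone u) = ⊤ :=
  StrongDual.span_eq_top_of_ne_zero fun z hz => by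
    by_contra! hcone
    exact hz <| eq_zero_of_forall_face_apply_eq_zero h fun φ hφ hφu =>
      hcone φ (by simp [normingCone, hφ, hφu])

lemma interior_normingCone_nonempty {u : Z} (h : 0 < nInd u) :
    (interior (normingCone u)).Nonempty := by
  rw [(convex_normingCone u).interior_nonempty_iff_affineSpan_eq_top,
    ← Set.insert_eq_of_mem (zero_mem_normingCone u), ← AffineSubspace.coe_eq_univ_iff,
    affineSpan_insert_zero, span_normingCone_eq_top h, Submodule.top_coe]

lemma countable_setOf_norm_eq_one_nInd_pos :
    {u : Z | ‖u‖ = 1 ∧ 0 < nInd u}.Countable :=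
  Set.PairwiseDisjoint.countable_of_isOpen (s := fun u => interior (normingCone u))
    (fun _ hu _ hv huv => disjoint_interior_normingCone hu.1.le hv.1.le huv)
    (fun _ _ => isOpen_interior) (fun _ hu => interior_normingCone_nonempty hu.2)

end FiniteDimensional

theorem stmt8 {Z : Type*} [NormedAddCommGroup Z] [NormedSpace ℝ Z] [FiniteDimensional ℝ Z] :
    {u : Z | ‖u‖ = 1 ∧ 0 < nInd u}.Countable
    ∧ {r : ℝ | ∃ u : Z, ‖u‖ = 1 ∧ nInd u = r}.Countable := by
  have hpos := countable_setOf_norm_eq_one_nInd_pos (Z := Z)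
  refine ⟨hpos, ((hpos.image nInd).insert 0).mono ?_⟩
  rintro r ⟨u, hu, rfl⟩
  rcases (nInd_nonneg u).eq_or_lt with hzero | hlt
  · exact Or.inl hzero.symm
  · exact Or.inr ⟨u, ⟨hu, hlt⟩, rfl⟩
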